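/- Koksma's inequality (classical case): if g : [0,1] → ℝ has bounded variation V(g) and t_1,...,t_N ∈ [0,1], then |∫₀¹ g(t) dt − (1/N)·Σ_{i=1}^N g(t_i)| ≤ V(g)·D*_N, where D*_N is the star discrepancy of the points with respect to the uniform distribution. -/

import Mathlib

/-!
Sort the points, `x₀ ≤ ⋯ ≤ x_{N-1}`; star discrepancy `D` forces `(i + 1)/N - D ≤ xᵢ ≤ i/N + D`.
For `h` monotone on `[0,1]`, extended by constants to a monotone `H` on `ℝ`, comparing on each cell
`[i/N, (i + 1)/N]` gives `∫₀¹ H(s - D) ≤ (1/N) ∑ h(xᵢ) ≤ ∫₀¹ H(s + D)`, and shifting the integrand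
by `D` moves the integral by at most `D (h 1 - h 0)`. With `v` the variation of `g` from `0`, both
`v + g` and `v - g` are monotone, `g` is half their difference, and their increments over `[0,1]`
add up to `2 V(g)`.
-/

open Set MeasureTheory

theorem Monotone.integral_sub_integral_comp_sub_le {f : ℝ → ℝ} (hf : Monotone f) {d : ℝ}
    (hd : 0 ≤ d) (a b : ℝ) :
    (∫ s in a..b, f s) - ∫ s in a..b, f (s - d) ≤ d * (f b - f (a - d)) := by
  have hint : ∀ u v : ℝ, IntervalIntegrable f volume u v := fun u v => hf.intervalIntegrable
  rw [intervalIntegral.integral_comp_sub_right,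
    intervalIntegral.integral_interval_sub_interval_comm' (hint _ _) (hint _ _) (hint _ _)]
  have hb : ∫ s in (b - d)..b, f s ≤ ∫ _ in (b - d)..b, f b :=
    intervalIntegral.integral_mono_on (by linarith) (hint _ _) intervalIntegrable_const
      fun s hs => hf hs.2
  have ha : ∫ _ in (a - d)..a, f (a - d) ≤ ∫ s in (a - d)..a, f s :=
    intervalIntegral.integral_mono_on (by linarith) intervalIntegrable_const (hint _ _)
      fun s hs => hf hs.1
  simp only [intervalIntegral.integral_const, smul_eq_mul, sub_sub_cancel] at ha hb
  linarith

section

variable {N : ℕ}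

theorem integral_le_mul_sum_of_le_on_grid (hN : 0 < N) {f : ℝ → ℝ}
    (hf : IntervalIntegrable f volume 0 1) {y : Fin N → ℝ}
    (hy : ∀ i : Fin N, ∀ s ∈ Icc ((i : ℝ) / N) ((i + 1) / N), f s ≤ y i) :
    ∫ s in (0:ℝ)..1, f s ≤ 1 / N * ∑ i, y i := by
  have hN' : (0 : ℝ) < N := by exact_mod_cast hN
  have hnode : ∀ k ≤ N, (k : ℝ) / N ∈ uIcc (0 : ℝ) 1 := fun k hk => by
    rw [uIcc_of_le zero_le_one]
    exact ⟨by positivity, (div_le_one hN').2 (by exact_mod_cast hk)⟩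
  have hcell : ∀ k < N, IntervalIntegrable f volume ((k : ℝ) / N) (((k + 1 : ℕ) : ℝ) / N) :=
    fun k hk => hf.mono_set (uIcc_subset_uIcc (hnode k hk.le) (hnode (k + 1) hk))
  have hsplit := intervalIntegral.sum_integral_adjacent_intervals hcell
  rw [Nat.cast_zero, zero_div, div_self hN'.ne'] at hsplit
  rw [← hsplit, Finset.mul_sum,
    ← Fin.sum_univ_eq_sum_range fun k => ∫ s in (k : ℝ) / N..((k + 1 : ℕ) : ℝ) / N, f s]
  refine Finset.sum_le_sum fun i _ => ?_
  have hle : (i : ℝ) / N ≤ ((i + 1 : ℕ) : ℝ) / N := by gcongr; simp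
  calc ∫ s in (i : ℝ) / N..((i + 1 : ℕ) : ℝ) / N, f s
      ≤ ∫ _ in (i : ℝ) / N..((i + 1 : ℕ) : ℝ) / N, y i :=
        intervalIntegral.integral_mono_on hle (hcell i i.isLt) intervalIntegrable_const
          fun s hs => hy i s (by simpa using hs)
    _ = 1 / N * y i := by
        rw [intervalIntegral.integral_const, smul_eq_mul]; push_cast; ring

theorem mul_sum_le_integral_of_le_on_grid (hN : 0 < N) {f : ℝ → ℝ}
    (hf : IntervalIntegrable f volume 0 1) {y : Fin N → ℝ}
    (hy : ∀ i : Fin N, ∀ s ∈ Icc ((i : ℝ) / N) ((i + 1) / N), y i ≤ f s) :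
    1 / N * ∑ i, y i ≤ ∫ s in (0:ℝ)..1, f s := by
  have := integral_le_mul_sum_of_le_on_grid hN hf.neg (y := -y)
    fun i s hs => neg_le_neg (hy i s hs)
  simpa [intervalIntegral.integral_neg, Finset.sum_neg_distrib] using this

theorem MonotoneOn.abs_integral_sub_mean_le (hN : 0 < N) {x : Fin N → ℝ}
    (hx : ∀ i, x i ∈ Icc (0:ℝ) 1) {h : ℝ → ℝ} (hh : MonotoneOn h (Icc (0:ℝ) 1)) {D : ℝ}
    (hlow : ∀ i : Fin N, ((i : ℝ) + 1) / N - D ≤ x i)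
    (hup : ∀ i : Fin N, x i ≤ (i : ℝ) / N + D) :
    |(∫ s in (0:ℝ)..1, h s) - 1 / N * ∑ i, h (x i)| ≤ D * (h 1 - h 0) := by
  have hD : 0 ≤ D := by
    have := (hlow ⟨0, hN⟩).trans (hup ⟨0, hN⟩)
    simp only [Nat.cast_zero, zero_add, zero_div] at this
    linarith [one_div_pos.2 (show (0:ℝ) < N by exact_mod_cast hN)]
  set H : ℝ → ℝ := IccExtend zero_le_one fun s : Icc (0:ℝ) 1 => h s
  have hH : Monotone H := (monotoneOn_iff_monotone.1 hh).IccExtend zero_le_one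
  have hHx (i : Fin N) : H (x i) = h (x i) := IccExtend_of_mem _ _ (hx i)
  have hH0 : ∀ s ≤ 0, H s = h 0 := fun s hs => IccExtend_of_le_left _ _ hs
  have hH1 : ∀ s ≥ 1, H s = h 1 := fun s hs => IccExtend_of_right_le _ _ hs
  have hHint : ∫ s in (0:ℝ)..1, H s = ∫ s in (0:ℝ)..1, h s :=
    intervalIntegral.integral_congr fun s hs =>
      IccExtend_of_mem _ _ (by rwa [uIcc_of_le zero_le_one] at hs)
  have hcell {i : Fin N} {s : ℝ} (hs : s ∈ Icc ((i : ℝ) / N) ((i + 1) / N)) :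
      s - D ≤ x i ∧ x i ≤ s + D :=
    ⟨by linarith [hs.2, hlow i], by linarith [hs.1, hup i]⟩
  have hHsub : Monotone fun s => H (s - D) := fun _ _ hst => hH (sub_le_sub_right hst D)
  have hHadd : Monotone fun s => H (s + D) := fun _ _ hst => hH (add_le_add_left hst D)
  have hleft : (∫ s in (0:ℝ)..1, H (s - D)) ≤ 1 / N * ∑ i, h (x i) := by
    simp_rw [← hHx]
    exact integral_le_mul_sum_of_le_on_grid hN hHsub.intervalIntegrable
      fun i s hs => hH (hcell hs).1
  have hright : 1 / N * ∑ i, h (x i) ≤ ∫ s in (0:ℝ)..1, H (s + D) := by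
    simp_rw [← hHx]
    exact mul_sum_le_integral_of_le_on_grid hN hHadd.intervalIntegrable
      fun i s hs => hH (hcell hs).2
  have hshift_down := hH.integral_sub_integral_comp_sub_le hD 0 1
  have hshift_up := hHadd.integral_sub_integral_comp_sub_le hD 0 1
  simp only [sub_add_cancel] at hshift_up
  rw [hH1 1 le_rfl, hH0 (0 - D) (by linarith), hHint] at hshift_down
  rw [hH1 (1 + D) (by linarith), hH0 0 le_rfl, hHint] at hshift_up
  rw [abs_le]
  constructor <;> linarith

theorem BoundedVariationOn.abs_integral_sub_mean_le (hN : 0 < N) {x : Fin N → ℝ}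
    (hx : ∀ i, x i ∈ Icc (0:ℝ) 1) {g : ℝ → ℝ} (hg : BoundedVariationOn g (Icc (0:ℝ) 1))
    {D : ℝ} (hlow : ∀ i : Fin N, ((i : ℝ) + 1) / N - D ≤ x i)
    (hup : ∀ i : Fin N, x i ≤ (i : ℝ) / N + D) :
    |(∫ s in (0:ℝ)..1, g s) - 1 / N * ∑ i, g (x i)| ≤
      (eVariationOn g (Icc (0:ℝ) 1)).toReal * D := by
  have h0 : (0:ℝ) ∈ Icc (0:ℝ) 1 := left_mem_Icc.2 zero_le_one
  set v := variationOnFromTo g (Icc (0:ℝ) 1) 0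
  have hp : MonotoneOn (v + g) (Icc (0:ℝ) 1) :=
    variationOnFromTo.add_self_monotoneOn hg.locallyBoundedVariationOn h0
  have hq : MonotoneOn (v - g) (Icc (0:ℝ) 1) :=
    variationOnFromTo.sub_self_monotoneOn hg.locallyBoundedVariationOn h0
  have hv : v 1 - v 0 = (eVariationOn g (Icc (0:ℝ) 1)).toReal := by
    simp only [v, variationOnFromTo.self, variationOnFromTo.eq_of_le _ _ zero_le_one, inter_self,
      sub_zero]
  have hI : IntervalIntegrable (v + g) volume 0 1 ∧ IntervalIntegrable (v - g) volume 0 1 := by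
    rw [← uIcc_of_le zero_le_one] at hp hq
    exact ⟨hp.intervalIntegrable, hq.intervalIntegrable⟩
  have hpq : (∫ s in (0:ℝ)..1, g s) - 1 / N * ∑ i, g (x i) =
      (((∫ s in (0:ℝ)..1, (v + g) s) - 1 / N * ∑ i, (v + g) (x i)) -
        ((∫ s in (0:ℝ)..1, (v - g) s) - 1 / N * ∑ i, (v - g) (x i))) / 2 := by
    rw [sub_sub_sub_comm, ← intervalIntegral.integral_sub hI.1 hI.2, ← mul_sub,
      ← Finset.sum_sub_distrib]
    simp only [Pi.add_apply, Pi.sub_apply, add_sub_sub_cancel, ← two_mul,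
      intervalIntegral.integral_const_mul, ← Finset.mul_sum]
    ring
  have hp' := hp.abs_integral_sub_mean_le hN hx hlow hup
  have hq' := hq.abs_integral_sub_mean_le hN hx hlow hup
  rw [hpq, abs_div, abs_two, div_le_iff₀ two_pos]
  refine (abs_sub _ _).trans ((add_le_add hp' hq').trans_eq ?_)
  simp only [Pi.add_apply, Pi.sub_apply]
  linear_combination 2 * D * hv

section Sorted

variable {α : Type*} [LinearOrder α] {x : Fin N → α}

theorem Monotone.succ_le_card_filter_le (hx : Monotone x) (i : Fin N) :
    (i : ℕ) + 1 ≤ (Finset.univ.filter fun j => x j ≤ x i).card := by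
  rw [← Fin.card_Iic]
  exact Finset.card_le_card fun j hj => by simpa using hx (Finset.mem_Iic.1 hj)

theorem Monotone.card_filter_le_le_of_lt (hx : Monotone x) {i : Fin N} {s : α} (hs : s < x i) :
    (Finset.univ.filter fun j => x j ≤ s).card ≤ i := by
  rw [← Fin.card_Iio]
  refine Finset.card_le_card fun j hj => Finset.mem_Iio.2 (lt_of_not_ge fun hij => ?_)
  simp only [Finset.mem_filter, Finset.mem_univ, true_and] at hj
  exact (hj.trans_lt hs).not_ge (hx hij)

end Sorted

theorem Monotone.succ_div_sub_le_of_discrepancy_le {x : Fin N → ℝ} {D : ℝ} (hx : Monotone x)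
    (hx01 : ∀ i, x i ∈ Icc (0:ℝ) 1)
    (hD : ∀ s ∈ Icc (0:ℝ) 1, |((Finset.univ.filter fun j => x j ≤ s).card : ℝ) / N - s| ≤ D)
    (i : Fin N) : ((i : ℝ) + 1) / N - D ≤ x i := by
  have hcount : ((i : ℝ) + 1) / N ≤ ((Finset.univ.filter fun j => x j ≤ x i).card : ℝ) / N := by
    gcongr; exact_mod_cast hx.succ_le_card_filter_le i
  linarith [(abs_le.1 (hD (x i) (hx01 i))).2]

theorem Monotone.le_div_add_of_discrepancy_le {x : Fin N → ℝ} {D : ℝ} (hx : Monotone x)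
    (hx01 : ∀ i, x i ∈ Icc (0:ℝ) 1)
    (hD : ∀ s ∈ Icc (0:ℝ) 1, |((Finset.univ.filter fun j => x j ≤ s).card : ℝ) / N - s| ≤ D)
    (i : Fin N) : x i ≤ (i : ℝ) / N + D := by
  have hi : (0:ℝ) ≤ (i : ℝ) / N := by positivity
  refine le_of_forall_lt_imp_le_of_dense fun s hs => ?_
  rcases lt_or_ge s 0 with hs0 | hs0
  · linarith [(abs_nonneg _).trans (hD 0 (left_mem_Icc.2 zero_le_one))]
  · have hcount : ((Finset.univ.filter fun j => x j ≤ s).card : ℝ) / N ≤ (i : ℝ) / N := by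
      gcongr; exact_mod_cast hx.card_filter_le_le_of_lt hs
    linarith [(abs_le.1 (hD s ⟨hs0, hs.le.trans (hx01 i).2⟩)).1]

end

/-- Classical Koksma inequality: the quadrature error of the equal-weight rule
is bounded by the total variation of `g` times the star discrepancy. -/
theorem koksma_inequality (N : ℕ) (hN : 0 < N)
    (t : Fin N → ℝ) (ht : ∀ i, t i ∈ Icc (0:ℝ) 1)
    (g : ℝ → ℝ) (hgBV : BoundedVariationOn g (Icc (0:ℝ) 1))
    (FN : ℝ → ℝ)
    (hFN : ∀ s, FN s = ((Finset.univ.filter (fun i => t i ≤ s)).card : ℝ) / N)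
    (DN : ℝ) (hDN : DN = sSup ((fun s => |FN s - s|) '' Icc (0:ℝ) 1)) :
    |(∫ s in (0:ℝ)..1, g s) - (1 / N) * ∑ i, g (t i)| ≤
      (eVariationOn g (Icc (0:ℝ) 1)).toReal * DN := by
  have hFN01 (s : ℝ) : FN s ∈ Icc (0:ℝ) 1 := by
    rw [hFN, mem_Icc, div_le_one (by exact_mod_cast hN)]
    exact ⟨by positivity, by exact_mod_cast (Finset.card_filter_le _ _).trans (by simp)⟩
  have hbdd : BddAbove ((fun s => |FN s - s|) '' Icc (0:ℝ) 1) := ⟨1, by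
    rintro _ ⟨s, hs, rfl⟩
    exact abs_sub_le_iff.2 ⟨by linarith [(hFN01 s).2, hs.1], by linarith [(hFN01 s).1, hs.2]⟩⟩
  have habs_le_DN (s : ℝ) (hs : s ∈ Icc (0:ℝ) 1) : |FN s - s| ≤ DN :=
    hDN ▸ le_csSup hbdd ⟨s, hs, rfl⟩
  set σ := Tuple.sort t
  have hsorted : Monotone (t ∘ σ) := Tuple.monotone_sort t
  have hcount (s : ℝ) : (Finset.univ.filter fun j => (t ∘ σ) j ≤ s).card =
      (Finset.univ.filter fun j => t j ≤ s).card := by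
    simp only [Finset.card_filter, Function.comp_apply,
      Equiv.sum_comp σ fun j => if t j ≤ s then 1 else 0]
  have hD (s : ℝ) (hs : s ∈ Icc (0:ℝ) 1) :
      |((Finset.univ.filter fun j => (t ∘ σ) j ≤ s).card : ℝ) / N - s| ≤ DN := by
    rw [hcount, ← hFN]; exact habs_le_DN s hs
  rw [← Equiv.sum_comp σ]
  exact hgBV.abs_integral_sub_mean_le hN (fun i => ht (σ i))
    (hsorted.succ_div_sub_le_of_discrepancy_le (fun i => ht (σ i)) hD)
    (hsorted.le_div_add_of_discrepancy_le (fun i => ht (σ i)) hD)
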